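/- Let p ≥ 2, 0 < α ≤ 1/2, θ ∈ (0,1), r_0 > 0 and L ≥ (32 α ln 32 / θ)^α, and set ω(r) = L (p + ln(r_0/r))^{-α} for 0 < r ≤ r_0 and r_i = 32^{-i} r_0 for integers i ≥ 0. Let (a_i)_{i≥0} be a nonincreasing sequence of nonnegative real numbers such that a_0 ≤ ω(r_0) and such that for every i ≥ 0, if ω(r_i) ≤ a_i then a_{i+1} ≤ a_i − θ ω(r_i)^{1 + 1/α}. Then a_i ≤ 32 ω(r_i) for every i ≥ 0. -/

import Mathlib

/-!
Write `W i = ω (r i) = L (p + i log 32)^(-α)`. The hypotheses on `L` and on `p` give the two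
facts `W i ≤ 32 W (i+1)` and `32 (W i - W (i+1)) ≤ θ W i ^ (1 + 1/α)`, the second one from the
Bernoulli inequality for the exponent `-α`. Then `a i ≤ 32 W i` propagates by induction: if
`a i < W i`, monotonicity of `a` and the first fact suffice; otherwise `a` drops by at least
`32 (W i - W (i+1))`, which is exactly the decrease of the bound `32 W`.
-/

open Real

theorem le_const_mul_of_decrease_above {K : ℝ} {W D a : ℕ → ℝ}
    (h0 : a 0 ≤ K * W 0) (hW : ∀ i, W i ≤ K * W (i + 1))
    (hD : ∀ i, K * (W i - W (i + 1)) ≤ D i) (ha : ∀ i, a (i + 1) ≤ a i)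
    (hstep : ∀ i, W i ≤ a i → a (i + 1) ≤ a i - D i) :
    ∀ i, a i ≤ K * W i := by
  intro i
  induction i with
  | zero => exact h0
  | succ i ih =>
    rcases le_or_gt (W i) (a i) with hWa | haW
    · linarith [hstep i hWa, hD i]
    · linarith [ha i, hW i]

theorem one_add_mul_self_le_rpow_one_add_of_nonpos {s : ℝ} (hs : -1 < s) {p : ℝ}
    (hp1 : -1 ≤ p) (hp2 : p ≤ 0) : 1 + p * s ≤ (1 + s) ^ p := by
  have hpow : (1 + s) ^ (-p) ≤ 1 + -p * s :=
    rpow_one_add_le_one_add_mul_self hs.le (by linarith) (by linarith)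
  have hpos : 0 < (1 + s) ^ (-p) := rpow_pos_of_pos (by linarith) _
  rw [← neg_neg p, rpow_neg (by linarith), neg_neg, ← one_div, le_div_iff₀ hpos]
  rcases le_or_gt 0 (1 + p * s) with h | h
  · nlinarith [mul_le_mul_of_nonneg_left hpow h, sq_nonneg (p * s)]
  · nlinarith

theorem rpow_neg_sub_rpow_neg_add_le {x c α : ℝ} (hx : 0 < x) (hc : 0 ≤ c)
    (hα0 : 0 ≤ α) (hα1 : α ≤ 1) :
    x ^ (-α) - (x + c) ^ (-α) ≤ α * c * x ^ (-α - 1) := by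
  have hsplit : (x + c) ^ (-α) = x ^ (-α) * (1 + c / x) ^ (-α) := by
    rw [← mul_rpow hx.le (by positivity), mul_add, mul_one, mul_div_cancel₀ _ hx.ne']
  have hbernoulli : 1 + -α * (c / x) ≤ (1 + c / x) ^ (-α) :=
    one_add_mul_self_le_rpow_one_add_of_nonpos (by linarith [div_nonneg hc hx.le])
      (by linarith) (by linarith)
  have hxα : 0 ≤ x ^ (-α) := (rpow_pos_of_pos hx _).le
  rw [hsplit, rpow_sub_one hx.ne']
  calc x ^ (-α) - x ^ (-α) * (1 + c / x) ^ (-α)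
      ≤ x ^ (-α) - x ^ (-α) * (1 + -α * (c / x)) := by
        linarith [mul_le_mul_of_nonneg_left hbernoulli hxα]
    _ = α * c * (x ^ (-α) / x) := by ring

theorem rpow_neg_le_div_mul_rpow_neg {x y α : ℝ} (hx : 0 < x) (hxy : x ≤ y) (hα1 : α ≤ 1) : x ^ (-α) ≤ y / x * y ^ (-α) := by
  have hy : 0 < y := hx.trans_le hxy
  have hsplit : x ^ (-α) = (y / x) ^ α * y ^ (-α) := by
    rw [div_rpow hy.le hx.le, rpow_neg hx.le, rpow_neg hy.le]
    field_simp [(rpow_pos_of_pos hy α).ne']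
  rw [hsplit]
  gcongr
  calc (y / x) ^ α ≤ (y / x) ^ (1 : ℝ) :=
        rpow_le_rpow_of_exponent_le ((one_le_div hx).mpr hxy) hα1
    _ = y / x := rpow_one _

theorem mul_rpow_neg_le_mul_mul_rpow_neg_add {K L x c α : ℝ} (hL : 0 ≤ L) (hx : 0 < x)
    (hc : 0 ≤ c) (hα1 : α ≤ 1) (hcx : x + c ≤ K * x) :
    L * x ^ (-α) ≤ K * (L * (x + c) ^ (-α)) := by
  have hratio : (x + c) / x ≤ K := (div_le_iff₀ hx).mpr hcx
  calc L * x ^ (-α) ≤ L * ((x + c) / x * (x + c) ^ (-α)) :=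
        mul_le_mul_of_nonneg_left (rpow_neg_le_div_mul_rpow_neg hx (by linarith) hα1) hL
    _ ≤ L * (K * (x + c) ^ (-α)) := by gcongr
    _ = K * (L * (x + c) ^ (-α)) := by ring

theorem mul_sub_le_mul_rpow_one_add_inv {K L θ x c α : ℝ} (hK : 0 ≤ K) (hL : 0 < L)
    (hx : 0 < x) (hc : 0 ≤ c) (hα0 : 0 < α) (hα1 : α ≤ 1)
    (hKL : K * α * c ≤ θ * L ^ (1 / α)) :
    K * (L * x ^ (-α) - L * (x + c) ^ (-α)) ≤ θ * (L * x ^ (-α)) ^ (1 + 1 / α) := by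
  have hexp : -α * (1 + 1 / α) = -α - 1 := by field_simp; ring
  have hpow : (L * x ^ (-α)) ^ (1 + 1 / α) = L ^ (1 / α) * (L * x ^ (-α - 1)) := by
    rw [mul_rpow hL.le (rpow_pos_of_pos hx _).le, ← rpow_mul hx.le, hexp, rpow_add hL,
      rpow_one]
    ring
  rw [hpow]
  calc K * (L * x ^ (-α) - L * (x + c) ^ (-α)) = K * L * (x ^ (-α) - (x + c) ^ (-α)) := by
        ring
    _ ≤ K * L * (α * c * x ^ (-α - 1)) := by
        gcongr
        exact rpow_neg_sub_rpow_neg_add_le hx hc hα0.le hα1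
    _ = K * α * c * (L * x ^ (-α - 1)) := by ring
    _ ≤ θ * L ^ (1 / α) * (L * x ^ (-α - 1)) := by gcongr
    _ = θ * (L ^ (1 / α) * (L * x ^ (-α - 1))) := by ring

theorem stefan_oscillation_iteration_general
    (p α θ r₀ L : ℝ) (hp : 2 ≤ p) (hα0 : 0 < α) (hα : α ≤ 1 / 2)
    (hθ0 : 0 < θ) (hr₀ : 0 < r₀)
    (hL : (32 * α * Real.log 32 / θ) ^ α ≤ L)
    (ω : ℝ → ℝ)
    (hω : ∀ r ∈ Set.Ioc (0 : ℝ) r₀, ω r = L * (p + Real.log (r₀ / r)) ^ (-α))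
    (r : ℕ → ℝ) (hr : ∀ i : ℕ, r i = r₀ / 32 ^ i)
    (a : ℕ → ℝ)
    (ha_anti : ∀ i, a (i + 1) ≤ a i)
    (ha0 : a 0 ≤ ω (r 0))
    (hstep : ∀ i, ω (r i) ≤ a i → a (i + 1) ≤ a i - θ * ω (r i) ^ (1 + 1 / α)) :
    ∀ i, a i ≤ 32 * ω (r i) := by
  set c := Real.log 32
  have hc0 : 0 < c := log_pos (by norm_num)
  have hc31 : c ≤ 31 := by linarith [log_le_sub_one_of_pos (show (0 : ℝ) < 32 by norm_num)]
  have hL0 : 0 < L := (rpow_pos_of_pos (by positivity) α).trans_le hL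
  have hKL : 32 * α * c ≤ θ * L ^ (1 / α) := by
    have h := (le_rpow_inv_iff_of_pos (by positivity) hL0.le hα0).mpr hL
    rw [div_le_iff₀ hθ0] at h
    rw [one_div]
    linarith
  have hx : ∀ i : ℕ, 2 ≤ p + i * c := fun i => by
    have : 0 ≤ (i : ℝ) * c := by positivity
    linarith
  have hωr : ∀ i : ℕ, ω (r i) = L * (p + i * c) ^ (-α) := fun i => by
    have hri : r i ∈ Set.Ioc 0 r₀ := by
      rw [hr]
      exact ⟨by positivity, div_le_self hr₀.le (one_le_pow₀ (by norm_num))⟩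
    rw [hω _ hri, hr, div_div_cancel₀ hr₀.ne', Real.log_pow]
  have hsucc : ∀ i : ℕ, p + ((i + 1 : ℕ) : ℝ) * c = p + i * c + c := fun i => by
    push_cast; ring
  refine le_const_mul_of_decrease_above ?_ (fun i => ?_) (fun i => ?_) ha_anti hstep
  · have : 0 ≤ ω (r 0) := by rw [hωr]; positivity
    linarith
  · rw [hωr, hωr, hsucc]
    exact mul_rpow_neg_le_mul_mul_rpow_neg_add hL0.le (by linarith [hx i]) hc0.le (by linarith) (by linarith [hx i])
  · rw [hωr, hωr, hsucc]
    exact mul_sub_le_mul_rpow_one_add_inv (by norm_num) hL0 (by linarith [hx i]) hc0.le hα0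
      (by linarith) hKL

/-- The real-analytic iteration at the heart of the derivation of the logarithmic
modulus of continuity for the two-phase Stefan problem. -/
theorem stefan_oscillation_iteration
    (p α θ r₀ L : ℝ) (hp : 2 ≤ p) (hα0 : 0 < α) (hα : α ≤ 1 / 2)
    (hθ0 : 0 < θ) (hθ1 : θ < 1) (hr₀ : 0 < r₀)
    (hL : (32 * α * Real.log 32 / θ) ^ α ≤ L)
    (ω : ℝ → ℝ)
    (hω : ∀ r ∈ Set.Ioc (0 : ℝ) r₀, ω r = L * (p + Real.log (r₀ / r)) ^ (-α))
    (r : ℕ → ℝ) (hr : ∀ i : ℕ, r i = r₀ / 32 ^ i)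
    (a : ℕ → ℝ)
    (ha_nonneg : ∀ i, 0 ≤ a i)
    (ha_anti : ∀ i, a (i + 1) ≤ a i)
    (ha0 : a 0 ≤ ω (r 0))
    (hstep : ∀ i, ω (r i) ≤ a i → a (i + 1) ≤ a i - θ * ω (r i) ^ (1 + 1 / α)) :
    ∀ i, a i ≤ 32 * ω (r i) :=
  stefan_oscillation_iteration_general p α θ r₀ L hp hα0 hα hθ0 hr₀ hL ω hω r hr a ha_anti ha0 hstep
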